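/- arXiv:1103.1455 — 5 statements merged into one kernel-verified Lean document; each statement's English description precedes it below -/
import Mathlib

section
/- Let c ≠ 0 be a real number and let x : ℝ → ℝ be twice differentiable with x''(t) + c·x'(t) = 0 for all t, x(0) = x₀, x'(0) = v₀, and set A₁ = x₀ + v₀/c. Then x also solves the conservative equation: x''(t) − c²·(x(t) − A₁) = 0 for all t ∈ ℝ. -/
/-! The damped equation says exactly that `c • x + x'` has derivative zero, so `c x + x'` is
constant, equal to `c x₀ + v₀ = c A₁`. Hence `x' = -c (x - A₁)`, and substituting this into
`x'' = -c x'` gives `x'' = c² (x - A₁)`. -/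

theorem smul_add_deriv_eq_of_deriv_deriv_add_smul_deriv_eq_zero
    {E : Type*} [NormedAddCommGroup E] [NormedSpace ℝ E] {x : ℝ → E} (c : ℝ)
    (hx : Differentiable ℝ x) (hx' : Differentiable ℝ (deriv x))
    (hode : ∀ t, deriv (deriv x) t + c • deriv x t = 0) (t s : ℝ) :
    c • x t + deriv x t = c • x s + deriv x s := by
  have hderiv : ∀ u, deriv (c • x + deriv x) u = 0 := fun u => by
    rw [(((hx u).hasDerivAt.const_smul c).add (hx' u).hasDerivAt).deriv, add_comm]
    exact hode u
  exact is_const_of_deriv_eq_zero ((hx.const_smul c).add hx') hderiv t s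

theorem stmt_3 (c : ℝ) (hc : c ≠ 0) (x : ℝ → ℝ) (x₀ v₀ A₁ : ℝ)
    (hx : Differentiable ℝ x) (hx' : Differentiable ℝ (deriv x))
    (hode : ∀ t : ℝ, deriv (deriv x) t + c * deriv x t = 0)
    (h0 : x 0 = x₀) (h0' : deriv x 0 = v₀)
    (hA₁ : A₁ = x₀ + v₀ / c) :
    ∀ t : ℝ, deriv (deriv x) t - c ^ 2 * (x t - A₁) = 0 := by
  intro t
  have hfirst : c * x t + deriv x t = c * x₀ + v₀ := by
    simpa only [smul_eq_mul, h0, h0'] using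
      smul_add_deriv_eq_of_deriv_deriv_add_smul_deriv_eq_zero c hx hx' hode t 0
  have hcA₁ : c * A₁ = c * x₀ + v₀ := by
    rw [hA₁]
    field_simp
  linear_combination hode t - c * hfirst + c * hcA₁
end

section
/- Let c ≠ 0 be a real number and let x : ℝ → ℝ be twice differentiable with x''(t) + c·x'(t) = 0 for all t, x(0) = x₀, x'(0) = v₀, and set A₁ = x₀ + v₀/c. Define the Hamiltonian Ĥ(q, p) = p²/2 − c²·q²/2 + c²·A₁·q. Then the function t ↦ Ĥ(x(t), x'(t)) is constant on ℝ. -/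
/-! The damped equation `x'' + c x' = 0` integrates once to `x' + c x = x'(0) + c x(0) = c A₁`,
i.e. `x' = c (A₁ - x)`, and along any pair `p = c (A₁ - q)` the Hamiltonian `Ĥ(q, p)` equals
`c² A₁² / 2`. -/

theorem deriv_add_const_smul_eq_of_deriv_deriv_add_const_smul_eq_zero
    {E : Type*} [NormedAddCommGroup E] [NormedSpace ℝ E] {x : ℝ → E} (c : ℝ)
    (hx : Differentiable ℝ x) (hx' : Differentiable ℝ (deriv x))
    (hode : ∀ t, deriv (deriv x) t + c • deriv x t = 0) (t : ℝ) :
    deriv x t + c • x t = deriv x 0 + c • x 0 := by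
  have hg : Differentiable ℝ fun s => deriv x s + c • x s := hx'.add (hx.fun_const_smul c)
  refine is_const_of_deriv_eq_zero hg (fun s => ?_) t 0
  rw [deriv_fun_add (hx' s) ((hx s).fun_const_smul c), deriv_fun_const_smul c (hx s), hode s]

theorem stmt_4 (c : ℝ) (hc : c ≠ 0) (x : ℝ → ℝ) (x₀ v₀ A₁ : ℝ)
    (hx : Differentiable ℝ x) (hx' : Differentiable ℝ (deriv x))
    (hode : ∀ t : ℝ, deriv (deriv x) t + c * deriv x t = 0)
    (h0 : x 0 = x₀) (h0' : deriv x 0 = v₀)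
    (hA₁ : A₁ = x₀ + v₀ / c)
    (H : ℝ → ℝ → ℝ)
    (hH : ∀ q p : ℝ, H q p = p ^ 2 / 2 - c ^ 2 * q ^ 2 / 2 + c ^ 2 * A₁ * q) :
    ∃ C : ℝ, ∀ t : ℝ, H (x t) (deriv x t) = C := by
  have hcA₁ : c * A₁ = v₀ + c * x₀ := by
    rw [hA₁]
    field_simp
    ring
  have hvel : ∀ t, deriv x t = c * (A₁ - x t) := fun t => by
    have := deriv_add_const_smul_eq_of_deriv_deriv_add_const_smul_eq_zero c hx hx' hode t
    simp only [smul_eq_mul, h0, h0'] at this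
    linear_combination this - hcA₁
  refine ⟨c ^ 2 * A₁ ^ 2 / 2, fun t => ?_⟩
  rw [hH, hvel t]
  ring
end

section
/- Let c ≠ 0 be a real number and let x : ℝ → ℝ be twice differentiable with x''(t) + c·x'(t) = 0 for all t, x(0) = x₀, x'(0) = v₀, and set A₁ = x₀ + v₀/c. Define the Hamiltonian Ĥ(q, p) = p²/2 − c²·q²/2 + c²·A₁·q and the total energy E(t) = (1/2)·x'(t)² + ∫₀ᵗ c·x'(s)² ds (kinetic energy plus the work done against the damping force). Then for all t ∈ ℝ, Ĥ(x(t), x'(t)) − E(t) = c²·A₁·x₀ − c²·x₀²/2; that is, the value of the Hamiltonian of the substitute conservative system equals the total energy of the damped system up to an additive constant depending only on the initial condition. -/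
/-!
Along a solution of `x'' + c x' = 0` the quantity `x' + c x` is conserved, equal to
`K = v₀ + c x₀`. Substituting `x' = K - c x` turns the dissipated power `c x'²` into
`c K x' - c² x x'`, the derivative of `c K x - c² x² / 2`. Since `c² A₁ = c K`, this antiderivative
is exactly the potential part of `Ĥ`, so `Ĥ(x, x') - E` stays at its value at `t = 0`.
-/

namespace DampedOscillator

variable {c : ℝ} {x : ℝ → ℝ}

theorem deriv_add_mul_eq_const (hx : Differentiable ℝ x) (hx' : Differentiable ℝ (deriv x))
    (hode : ∀ t, deriv (deriv x) t + c * deriv x t = 0) (t : ℝ) :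
    deriv x t + c * x t = deriv x 0 + c * x 0 := by
  have hdiff : Differentiable ℝ (fun t => deriv x t + c * x t) := hx'.add (hx.const_mul c)
  refine is_const_of_deriv_eq_zero hdiff (fun s => ?_) t 0
  rw [deriv_fun_add hx'.differentiableAt (hx.const_mul c).differentiableAt,
    deriv_const_mul _ hx.differentiableAt, hode s]

theorem hasDerivAt_dissipation_potential {K : ℝ} (hx : Differentiable ℝ x)
    (hK : ∀ t, deriv x t = K - c * x t) (t : ℝ) :
    HasDerivAt (fun t => c * K * x t - c ^ 2 * x t ^ 2 / 2) (c * deriv x t ^ 2) t := by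
  have hxt : HasDerivAt x (deriv x t) t := (hx t).hasDerivAt
  refine ((hxt.const_mul (c * K)).sub
    (((hxt.fun_pow 2).const_mul (c ^ 2)).div_const 2)).congr_deriv ?_
  linear_combination (-(c * deriv x t)) * hK t

theorem integral_dissipated_power {K : ℝ} (hx : Differentiable ℝ x)
    (hx' : Differentiable ℝ (deriv x)) (hK : ∀ t, deriv x t = K - c * x t) (t : ℝ) :
    ∫ s in (0 : ℝ)..t, c * deriv x s ^ 2 =
      (c * K * x t - c ^ 2 * x t ^ 2 / 2) - (c * K * x 0 - c ^ 2 * x 0 ^ 2 / 2) :=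
  intervalIntegral.integral_eq_sub_of_hasDerivAt
    (fun s _ => hasDerivAt_dissipation_potential hx hK s)
    ((continuous_const.mul (hx'.continuous.pow 2)).intervalIntegrable 0 t)

end DampedOscillator

open DampedOscillator in
theorem stmt_5_general (c : ℝ) (x : ℝ → ℝ) (x₀ v₀ A₁ : ℝ)
    (hx : Differentiable ℝ x) (hx' : Differentiable ℝ (deriv x))
    (hode : ∀ t : ℝ, deriv (deriv x) t + c * deriv x t = 0)
    (h0 : x 0 = x₀) (h0' : deriv x 0 = v₀)
    (hA₁ : A₁ = x₀ + v₀ / c)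
    (H : ℝ → ℝ → ℝ)
    (hH : ∀ q p : ℝ, H q p = p ^ 2 / 2 - c ^ 2 * q ^ 2 / 2 + c ^ 2 * A₁ * q)
    (E : ℝ → ℝ)
    (hE : ∀ t : ℝ, E t = (1 / 2) * (deriv x t) ^ 2 + ∫ s in (0:ℝ)..t, c * (deriv x s) ^ 2) :
    ∀ t : ℝ, H (x t) (deriv x t) - E t = c ^ 2 * A₁ * x₀ - c ^ 2 * x₀ ^ 2 / 2 := by
  have hK : ∀ t, deriv x t = (v₀ + c * x₀) - c * x t := fun t => by
    linarith [h0 ▸ h0' ▸ deriv_add_mul_eq_const hx hx' hode t]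
  -- Holds also for `c = 0`, since Lean's `v₀ / 0 = 0`.
  have hcA₁ : c ^ 2 * A₁ = c * (v₀ + c * x₀) := by
    rcases eq_or_ne c 0 with rfl | hc
    · simp
    · rw [hA₁]; field_simp; ring
  intro t
  rw [hH, hE, integral_dissipated_power hx hx' hK, hcA₁, h0]
  ring

theorem stmt_5 (c : ℝ) (hc : c ≠ 0) (x : ℝ → ℝ) (x₀ v₀ A₁ : ℝ)
    (hx : Differentiable ℝ x) (hx' : Differentiable ℝ (deriv x))
    (hode : ∀ t : ℝ, deriv (deriv x) t + c * deriv x t = 0)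
    (h0 : x 0 = x₀) (h0' : deriv x 0 = v₀)
    (hA₁ : A₁ = x₀ + v₀ / c)
    (H : ℝ → ℝ → ℝ)
    (hH : ∀ q p : ℝ, H q p = p ^ 2 / 2 - c ^ 2 * q ^ 2 / 2 + c ^ 2 * A₁ * q)
    (E : ℝ → ℝ)
    (hE : ∀ t : ℝ, E t = (1 / 2) * (deriv x t) ^ 2 + ∫ s in (0:ℝ)..t, c * (deriv x s) ^ 2) :
    ∀ t : ℝ, H (x t) (deriv x t) - E t = c ^ 2 * A₁ * x₀ - c ^ 2 * x₀ ^ 2 / 2 :=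
  stmt_5_general c x x₀ v₀ A₁ hx hx' hode h0 h0' hA₁ H hH E hE
end

section
/- Let c ≠ 0 and A₁ be real numbers, and let y : ℝ → ℝ be twice differentiable satisfying simultaneously y''(t) + c·y'(t) = 0 and y''(t) − c²·(y(t) − A₁) = 0 for all t ∈ ℝ. Then y'(t) = −c·(y(t) − A₁) for all t ∈ ℝ; consequently any common solution of the damped system and the substitute conservative system lies on the single phase curve {(q, p) : p = −c·(q − A₁)}. -/
theorem stmt_7 (c A₁ : ℝ) (hc : c ≠ 0) (y : ℝ → ℝ)
    (hy : Differentiable ℝ y) (hy' : Differentiable ℝ (deriv y))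
    (hode1 : ∀ t : ℝ, deriv (deriv y) t + c * deriv y t = 0)
    (hode2 : ∀ t : ℝ, deriv (deriv y) t - c ^ 2 * (y t - A₁) = 0) :
    ∀ t : ℝ, deriv y t = -c * (y t - A₁) := by
  intro t
  have h1 := hode1 t
  have h2 := hode2 t
  have : c * deriv y t = -(c ^ 2 * (y t - A₁)) := by linarith
  apply mul_left_cancel₀ hc
  rw [this]; ring
end

section
/- Let c ≠ 0 be a real number and let x : ℝ → ℝ be twice differentiable with x''(t) + c·x'(t) = 0 for all t. Then there exists a differentiable potential V : ℝ → ℝ such that x''(t) + V'(x(t)) = 0 for all t ∈ ℝ and the function t ↦ (1/2)·x'(t)² + V(x(t)) is constant on ℝ; that is, there exists a conservative one-dimensional mechanical system sharing the given trajectory of the damped system, whose Hamiltonian is constant along that trajectory. -/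
/-!
Along a solution of `x'' + c x' = 0` the quantity `x' + c x` is conserved, so the trajectory
solves the autonomous first-order equation `x' = f(x)` with `f q = B - c q`, `B = x'(0) + c x(0)`.
Every trajectory of `x' = f(x)` is also a trajectory of the conservative system with potential
`V = -f² / 2`, since then `x'' = f'(x) f(x) = -V'(x)`; its energy
`x'² / 2 + V(x) = f(x)² / 2 - f(x)² / 2` vanishes.
-/

noncomputable def autonomousPotential (f : ℝ → ℝ) (q : ℝ) : ℝ := -f q ^ 2 / 2

theorem hasDerivAt_autonomousPotential {f : ℝ → ℝ} {q : ℝ} (hf : DifferentiableAt ℝ f q) :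
    HasDerivAt (autonomousPotential f) (-(f q * deriv f q)) q := by
  have h := ((hf.hasDerivAt.fun_pow 2).fun_neg).div_const 2
  rw [show -(f q * deriv f q) = -((2 : ℕ) * f q ^ (2 - 1) * deriv f q) / 2 by push_cast; ring]
  exact h

theorem Differentiable.autonomousPotential {f : ℝ → ℝ} (hf : Differentiable ℝ f) :
    Differentiable ℝ (autonomousPotential f) :=
  fun q => (hasDerivAt_autonomousPotential (hf q)).differentiableAt

theorem deriv_deriv_of_deriv_eq_comp {f x : ℝ → ℝ} (hf : Differentiable ℝ f)
    (hx : Differentiable ℝ x) (hfx : ∀ t, deriv x t = f (x t)) (t : ℝ) :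
    deriv (deriv x) t = deriv f (x t) * f (x t) := by
  rw [show deriv x = f ∘ x from funext hfx, deriv_comp t (hf (x t)) (hx t), hfx]

theorem autonomousPotential_solves_of_deriv_eq_comp {f x : ℝ → ℝ} (hf : Differentiable ℝ f)
    (hx : Differentiable ℝ x) (hfx : ∀ t, deriv x t = f (x t)) (t : ℝ) :
    deriv (deriv x) t + deriv (autonomousPotential f) (x t) = 0 := by
  rw [deriv_deriv_of_deriv_eq_comp hf hx hfx, (hasDerivAt_autonomousPotential (hf (x t))).deriv]
  ring

theorem energy_autonomousPotential_of_deriv_eq_comp {f x : ℝ → ℝ}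
    (hfx : ∀ t, deriv x t = f (x t)) (t : ℝ) :
    (1 / 2) * deriv x t ^ 2 + autonomousPotential f (x t) = 0 := by
  rw [hfx, autonomousPotential]
  ring

theorem deriv_add_mul_eq_of_damped {c : ℝ} {x : ℝ → ℝ} (hx : Differentiable ℝ x)
    (hx' : Differentiable ℝ (deriv x)) (hode : ∀ t, deriv (deriv x) t + c * deriv x t = 0)
    (t : ℝ) : deriv x t + c * x t = deriv x 0 + c * x 0 := by
  have hdiff : Differentiable ℝ fun s => deriv x s + c * x s := hx'.add (hx.const_mul c)
  refine is_const_of_deriv_eq_zero hdiff (fun s => ?_) t 0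
  rw [deriv_fun_add (hx' s) ((hx.const_mul c) s), deriv_const_mul c (hx s), hode]

theorem stmt_10_general (c : ℝ) (x : ℝ → ℝ)
    (hx : Differentiable ℝ x) (hx' : Differentiable ℝ (deriv x))
    (hode : ∀ t : ℝ, deriv (deriv x) t + c * deriv x t = 0) :
    ∃ V : ℝ → ℝ, Differentiable ℝ V ∧
      (∀ t : ℝ, deriv (deriv x) t + deriv V (x t) = 0) ∧
      (∃ C : ℝ, ∀ t : ℝ, (1 / 2) * (deriv x t) ^ 2 + V (x t) = C) := by
  set f : ℝ → ℝ := fun q => deriv x 0 + c * x 0 - c * q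
  have hf : Differentiable ℝ f := by fun_prop
  have hfx : ∀ t, deriv x t = f (x t) := fun t => by
    linarith [deriv_add_mul_eq_of_damped hx hx' hode t]
  exact ⟨autonomousPotential f, hf.autonomousPotential,
    autonomousPotential_solves_of_deriv_eq_comp hf hx hfx,
    0, energy_autonomousPotential_of_deriv_eq_comp hfx⟩

theorem stmt_10 (c : ℝ) (hc : c ≠ 0) (x : ℝ → ℝ)
    (hx : Differentiable ℝ x) (hx' : Differentiable ℝ (deriv x))
    (hode : ∀ t : ℝ, deriv (deriv x) t + c * deriv x t = 0) :
    ∃ V : ℝ → ℝ, Differentiable ℝ V ∧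
      (∀ t : ℝ, deriv (deriv x) t + deriv V (x t) = 0) ∧
      (∃ C : ℝ, ∀ t : ℝ, (1 / 2) * (deriv x t) ^ 2 + V (x t) = C) :=
  stmt_10_general c x hx hx' hode
end
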